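/- arXiv:math/9811044 — 2 statements merged into one kernel-verified Lean document; each statement's English description precedes it below -/
import Mathlib

section
/- With the hypotheses of the twisting theorem — R ∈ End(V⊗V) invertible satisfying the Yang–Baxter equation, F ∈ End(V⊗V) invertible, Φ, Ψ ∈ End(V⊗V⊗V) invertible with Φ F₁₂ = Ψ F₂₃, R₁₂ Φ = Φ^{(213)} R₁₂, R₂₃ Ψ = Ψ^{(132)} R₂₃ — set R̃ = τ(F)⁻¹ R F. Then the auxiliary identity F₁₂⁻¹ ∘ (Ψ^{(312)})⁻¹ ∘ R₁₃ ∘ R₂₃ ∘ Φ ∘ F₁₂ = R̃₁₃ ∘ R̃₂₃ holds in End(V ⊗ V ⊗ V). -/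
open TensorProduct

noncomputable section
variable (k V : Type*) [Field k] [AddCommGroup V] [Module k V]

/-- The flip `P : V ⊗ V → V ⊗ V`. -/
def flipE : Module.End k (V ⊗[k] V) := (TensorProduct.comm k V V).toLinearMap

/-- `τ(X) = P X P`. -/
def tauE (X : Module.End k (V ⊗[k] V)) : Module.End k (V ⊗[k] V) :=
  flipE k V * X * flipE k V

/-- The embedding `X ↦ X₂₃` into `End(V ⊗ V ⊗ V)`. -/
def leg23 (X : Module.End k (V ⊗[k] V)) : Module.End k (V ⊗[k] (V ⊗[k] V)) :=
  LinearMap.lTensor V X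

/-- The embedding `X ↦ X₁₂` into `End(V ⊗ V ⊗ V)`. -/
def leg12 (X : Module.End k (V ⊗[k] V)) : Module.End k (V ⊗[k] (V ⊗[k] V)) :=
  (TensorProduct.assoc k V V V).toLinearMap ∘ₗ LinearMap.rTensor V X ∘ₗ
    (TensorProduct.assoc k V V V).symm.toLinearMap

/-- The flip of factors 1 and 2. -/
def P12 : Module.End k (V ⊗[k] (V ⊗[k] V)) := leg12 k V (flipE k V)

/-- The flip of factors 2 and 3. -/
def P23 : Module.End k (V ⊗[k] (V ⊗[k] V)) := leg23 k V (flipE k V)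

/-- The embedding `X ↦ X₁₃`. -/
def leg13 (X : Module.End k (V ⊗[k] V)) : Module.End k (V ⊗[k] (V ⊗[k] V)) :=
  P23 k V * leg12 k V X * P23 k V

/-- The Yang–Baxter equation `R₁₂R₁₃R₂₃ = R₂₃R₁₃R₁₂`. -/
def YB (R : Module.End k (V ⊗[k] V)) : Prop :=
  leg12 k V R * leg13 k V R * leg23 k V R = leg23 k V R * leg13 k V R * leg12 k V R

/-- The cyclic permutation of tensor factors `v₁⊗v₂⊗v₃ ↦ v₂⊗v₃⊗v₁`, i.e. the
permutation operator `P_σ` with `σ` such that `Y^{(312)} = P_σ Y P_σ⁻¹`. -/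
def C312 : Module.End k (V ⊗[k] (V ⊗[k] V)) := P23 k V * P12 k V

/-!
Since `Φ F₁₂ = Ψ F₂₃`, the factor `R₂₃` crosses `Ψ` as `R₂₃ Ψ = Ψ^{(132)} R₂₃`; trading `Ψ` back
for `Φ F₁₂ F₂₃⁻¹` and writing `R₁₃ = P₂₃ R₁₂ P₂₃`, the factor `R₁₂` then crosses `Φ` as
`R₁₂ Φ = Φ^{(213)} R₁₂`. The conjugated `Ψ⁻¹` on the left now meets `Φ`, and `Ψ⁻¹ Φ = F₂₃ F₁₂⁻¹`.
What is left is a word in legs of `F`, `F⁻¹`, `R` and the flips `P₁₂`, `P₂₃`; moving the flips to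
the right (`P₁₂ X₂₃ = X₁₃ P₁₂`, `P₂₃ X₁₂ = X₁₃ P₂₃`, `P₁₂ X₁₂ = τ(X)₁₂ P₁₂`, ...) leaves
`τ(F)⁻¹₁₃ R₁₃ F₁₃ τ(F)⁻¹₂₃ R₂₃ F₂₃ = R̃₁₃ R̃₂₃`.
-/

theorem mul_mul_eq_of_mul_eq_one {M : Type*} [Monoid M] {a b : M} (h : a * b = 1) (x : M) :
    a * (b * x) = x := by
  rw [← mul_assoc, h, one_mul]

theorem mul_mul_eq_of_mul_eq {M : Type*} [Semigroup M] {a b c d : M} (h : a * b = c * d)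
    (x : M) : a * (b * x) = c * (d * x) := by
  rw [← mul_assoc, h, mul_assoc]

section Legs

variable {k V}

theorem flipE_mul_self : flipE k V * flipE k V = 1 := by
  ext; simp [flipE]

theorem leg12_mul (X Y : Module.End k (V ⊗[k] V)) :
    leg12 k V (X * Y) = leg12 k V X * leg12 k V Y := by
  ext; simp [leg12]

theorem leg23_mul (X Y : Module.End k (V ⊗[k] V)) :
    leg23 k V (X * Y) = leg23 k V X * leg23 k V Y :=
  LinearMap.lTensor_mul V X Y

theorem leg12_mul_leg12_of_mul_eq_one {X Y : Module.End k (V ⊗[k] V)} (h : X * Y = 1) :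
    leg12 k V X * leg12 k V Y = 1 := by
  rw [← leg12_mul, h]
  ext; simp [leg12]

theorem leg23_mul_leg23_of_mul_eq_one {X Y : Module.End k (V ⊗[k] V)} (h : X * Y = 1) :
    leg23 k V X * leg23 k V Y = 1 := by
  rw [← leg23_mul, h]
  exact LinearMap.lTensor_id V (V ⊗[k] V)

theorem P12_mul_self : P12 k V * P12 k V = 1 :=
  leg12_mul_leg12_of_mul_eq_one flipE_mul_self

theorem P23_mul_self : P23 k V * P23 k V = 1 :=
  leg23_mul_leg23_of_mul_eq_one flipE_mul_self

theorem leg13_mul (X Y : Module.End k (V ⊗[k] V)) :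
    leg13 k V (X * Y) = leg13 k V X * leg13 k V Y := by
  simp only [leg13, leg12_mul, mul_assoc, mul_mul_eq_of_mul_eq_one P23_mul_self]

theorem P12_mul_leg12 (X : Module.End k (V ⊗[k] V)) :
    P12 k V * leg12 k V X = leg12 k V (tauE k V X) * P12 k V := by
  rw [P12, tauE, ← leg12_mul, ← leg12_mul, mul_assoc _ (flipE k V), flipE_mul_self, mul_one]

theorem P23_mul_leg23 (X : Module.End k (V ⊗[k] V)) :
    P23 k V * leg23 k V X = leg23 k V (tauE k V X) * P23 k V := by
  rw [P23, tauE, ← leg23_mul, ← leg23_mul, mul_assoc _ (flipE k V), flipE_mul_self, mul_one]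

theorem P23_mul_leg12 (X : Module.End k (V ⊗[k] V)) :
    P23 k V * leg12 k V X = leg13 k V X * P23 k V := by
  rw [leg13, mul_assoc _ (P23 k V), P23_mul_self, mul_one]

theorem P23_mul_leg13 (X : Module.End k (V ⊗[k] V)) :
    P23 k V * leg13 k V X = leg12 k V X * P23 k V := by
  rw [leg13, ← mul_assoc, ← mul_assoc, P23_mul_self, one_mul]

theorem P12_mul_leg23 (X : Module.End k (V ⊗[k] V)) :
    P12 k V * leg23 k V X = leg13 k V X * P12 k V := by
  ext v w u
  simp only [P12, leg12, flipE, leg23, AlgebraTensorModule.curry_apply,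
    LinearMap.restrictScalars_self, curry_apply, Module.End.mul_apply, LinearMap.lTensor_tmul,
    LinearMap.coe_comp, LinearEquiv.coe_coe, Function.comp_apply, leg13, P23, assoc_symm_tmul,
    LinearMap.rTensor_tmul, comm_tmul, assoc_tmul]
  induction X (w ⊗ₜ[k] u) using TensorProduct.induction_on with
  | zero => simp
  | tmul a b => simp
  | add x y hx hy => simp_all [tmul_add, add_tmul]

theorem leg13_mul_leg23_mul_mul_leg12 {R F F' : Module.End k (V ⊗[k] V)}
    {Φ Ψ : Module.End k (V ⊗[k] (V ⊗[k] V))} (hF : F * F' = 1)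
    (cond1 : Φ * leg12 k V F = Ψ * leg23 k V F)
    (cond2 : leg12 k V R * Φ = (P12 k V * Φ * P12 k V) * leg12 k V R)
    (cond3 : leg23 k V R * Ψ = (P23 k V * Ψ * P23 k V) * leg23 k V R) :
    leg13 k V R * (leg23 k V R * (Φ * leg12 k V F)) =
      P23 k V * (P12 k V * (Φ * (P12 k V * (leg12 k V R * (leg12 k V F *
        (leg23 k V F' * (P23 k V * (leg23 k V R * leg23 k V F)))))))) := by
  have hΨ : Ψ = Φ * leg12 k V F * leg23 k V F' := by
    rw [cond1, mul_assoc, leg23_mul_leg23_of_mul_eq_one hF, mul_one]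
  calc _ = leg13 k V R * (P23 k V * (Ψ * (P23 k V * (leg23 k V R * leg23 k V F)))) := by
        simp only [cond1, mul_mul_eq_of_mul_eq cond3, mul_assoc]
    _ = P23 k V * (leg12 k V R * (Ψ * (P23 k V * (leg23 k V R * leg23 k V F)))) := by
        simp only [leg13, mul_assoc, mul_mul_eq_of_mul_eq_one P23_mul_self]
    _ = _ := by
        simp only [hΨ, mul_assoc, mul_mul_eq_of_mul_eq cond2]

end Legs

theorem twist_auxiliary_identity
    (R F F' : Module.End k (V ⊗[k] V))
    (Φ Ψ Ψ' : Module.End k (V ⊗[k] (V ⊗[k] V)))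
    (hF : F * F' = 1) (hF' : F' * F = 1)
    (hΨ' : Ψ' * Ψ = 1)
    (cond1 : Φ * leg12 k V F = Ψ * leg23 k V F)
    (cond2 : leg12 k V R * Φ = (P12 k V * Φ * P12 k V) * leg12 k V R)
    (cond3 : leg23 k V R * Ψ = (P23 k V * Ψ * P23 k V) * leg23 k V R) :
    leg12 k V F' * (C312 k V * Ψ' * (P12 k V * P23 k V)) *
      leg13 k V R * leg23 k V R * Φ * leg12 k V F =
    leg13 k V (tauE k V F' * R * F) * leg23 k V (tauE k V F' * R * F) := by
  have hΨ'Φ : Ψ' * Φ = leg23 k V F * leg12 k V F' := by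
    calc Ψ' * Φ = Ψ' * (Φ * leg12 k V F) * leg12 k V F' := by
          rw [mul_assoc, mul_assoc, leg12_mul_leg12_of_mul_eq_one hF, mul_one]
      _ = leg23 k V F * leg12 k V F' := by rw [cond1, ← mul_assoc, hΨ', one_mul]
  simp only [C312, leg13_mul, leg23_mul, mul_assoc,
    leg13_mul_leg23_mul_mul_leg12 hF cond1 cond2 cond3, mul_mul_eq_of_mul_eq_one P12_mul_self,
    mul_mul_eq_of_mul_eq_one P23_mul_self, mul_mul_eq_of_mul_eq hΨ'Φ]
  rw [mul_mul_eq_of_mul_eq (P12_mul_leg23 F), mul_mul_eq_of_mul_eq (P12_mul_leg12 F'),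
    mul_mul_eq_of_mul_eq_one P12_mul_self, mul_mul_eq_of_mul_eq (P23_mul_leg13 F),
    mul_mul_eq_of_mul_eq_one (leg12_mul_leg12_of_mul_eq_one hF'),
    mul_mul_eq_of_mul_eq (P23_mul_leg12 (tauE k V F')), mul_mul_eq_of_mul_eq (P23_mul_leg12 R),
    mul_mul_eq_of_mul_eq (P23_mul_leg12 F), mul_mul_eq_of_mul_eq (P23_mul_leg23 F'),
    mul_mul_eq_of_mul_eq_one P23_mul_self]
end
end

section
/- Gauge transformations of twisting pairs: let R ∈ End(V⊗V) be an invertible solution of the Yang–Baxter equation and (Ω², Ω³) = (F, G) a twisting pair for R with twisted matrix R̃ = τ(F)⁻¹ R F. Let u¹ ∈ End(V) be invertible, u² ∈ End(V⊗V) invertible and R-symmetric (i.e. R u² = τ(u²) R, equivalently u² commutes with the braid matrix P R), and u³ ∈ End(V⊗V⊗V) invertible and R-symmetric (i.e. R_{i,i+1} u³ = τ_{i,i+1}(u³) R_{i,i+1} for i = 1, 2). Then (u² F (u¹⊗u¹), u³ G (u¹⊗u¹⊗u¹)) is again a twisting pair for R, and its associated twisted R-matrix is (u¹⊗u¹)⁻¹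 R̃ (u¹⊗u¹). -/
open TensorProduct

noncomputable section
variable (k V : Type*) [Field k] [AddCommGroup V] [Module k V]

/-- `(F, G)` (with given two-sided inverses `F'`, `G'`) is a *twisting pair* for `R`:
`Φ := G F₁₂⁻¹` and `Ψ := G F₂₃⁻¹` satisfy `R₁₂ Φ = Φ^{(213)} R₁₂` and
`R₂₃ Ψ = Ψ^{(132)} R₂₃`. -/
def TwistingPair (R F F' : Module.End k (V ⊗[k] V))
    (G G' : Module.End k (V ⊗[k] (V ⊗[k] V))) : Prop :=
  F * F' = 1 ∧ F' * F = 1 ∧ G * G' = 1 ∧ G' * G = 1 ∧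
  leg12 k V R * (G * leg12 k V F') =
    (P12 k V * (G * leg12 k V F') * P12 k V) * leg12 k V R ∧
  leg23 k V R * (G * leg23 k V F') =
    (P23 k V * (G * leg23 k V F') * P23 k V) * leg23 k V R

/-!
Since `P * P = 1`, the identity `R x = (P x P) R` says exactly that `x` commutes with the braid
matrix `P R`; such elements are closed under products and inverses. Splitting
`u¹ ⊗ u¹ ⊗ u¹ = (u¹ ⊗ u¹)₁₂ u¹₃`, the new `Φ` becomes `u³ Φ (u²)⁻¹₁₂ u¹₃`, a product of factors
commuting with `(P R)₁₂` (the last one because it acts on another leg); `Ψ` is handled in the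
same way with `u¹ ⊗ u¹ ⊗ u¹ = (u¹ ⊗ u¹)₂₃ u¹₁`.
-/

section Monoid

variable {M : Type*} [Monoid M]

theorem mul_eq_conj_mul_iff_commute {p r x : M} (hp : p * p = 1) :
    r * x = p * x * p * r ↔ Commute (p * r) x := by
  constructor
  · intro h
    calc p * r * x = p * (p * x * p * r) := by rw [mul_assoc, h]
      _ = x * (p * r) := by simp only [← mul_assoc, hp, one_mul]
  · intro h
    calc r * x = p * (p * r * x) := by simp only [← mul_assoc, hp, one_mul]
      _ = p * x * p * r := by rw [h.eq]; simp only [mul_assoc]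

theorem Commute.of_mul_eq_one_right {a u u' : M} (h : Commute a u) (hu : u * u' = 1)
    (hu' : u' * u = 1) : Commute a u' :=
  Commute.units_inv_right (u := ⟨u, u', hu, hu'⟩) h

theorem mul_eq_conj_mul_of_mul_eq_one {p r u u' : M} (hp : p * p = 1) (hu : u * u' = 1)
    (hu' : u' * u = 1) (h : r * u = p * u * p * r) : r * u' = p * u' * p * r :=
  (mul_eq_conj_mul_iff_commute hp).mpr
    (((mul_eq_conj_mul_iff_commute hp).mp h).of_mul_eq_one_right hu hu')

theorem mul_mul_mul_eq_one {a b c a' b' c' : M} (ha : a * a' = 1) (hb : b * b' = 1)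
    (hc : c * c' = 1) : a * b * c * (c' * b' * a') = 1 := by
  calc a * b * c * (c' * b' * a') = a * (b * (c * c') * b') * a' := by simp only [mul_assoc]
    _ = 1 := by rw [hc, mul_one, hb, mul_one, ha]

/-- `L` plays the role of a leg embedding `X ↦ X₁₂` or `X ↦ X₂₃`, and `w` that of the
complementary one-leg factor `u¹₃` or `u¹₁`. -/
theorem twistCondition_gauge {N : Type*} [Monoid N] (L : M →* N) {p r : M}
    (hp : p * p = 1) {w : N} (hw : ∀ X, Commute w (L X)) {A A' u₂ u₂' F' : M}
    (hA : A * A' = 1) (hu₂ : u₂ * u₂' = 1) (hu₂' : u₂' * u₂ = 1)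
    (hu₂sym : r * u₂ = p * u₂ * p * r) {u₃ G : N}
    (hu₃sym : L r * u₃ = L p * u₃ * L p * L r)
    (hΦ : L r * (G * L F') = L p * (G * L F') * L p * L r) :
    L r * (u₃ * G * (L A * w) * L (A' * F' * u₂')) =
      L p * (u₃ * G * (L A * w) * L (A' * F' * u₂')) * L p * L r := by
  have hLp : L p * L p = 1 := by rw [← map_mul, hp, map_one]
  have hw_absorb : L A * w * L (A' * F' * u₂') = L F' * L u₂' * w := by
    calc L A * w * L (A' * F' * u₂') = L (A * A') * (w * L (F' * u₂')) := by
          simp only [map_mul, mul_assoc]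
          rw [(hw A').left_comm]
      _ = L F' * L u₂' * w := by rw [hA, map_one, one_mul, (hw _).eq, map_mul]
  have hprod : u₃ * G * (L A * w) * L (A' * F' * u₂') = u₃ * (G * L F') * L u₂' * w := by
    rw [mul_assoc (u₃ * G), hw_absorb]
    simp only [mul_assoc]
  have hu₂'comm : Commute (L p * L r) (L u₂') := by
    rw [← map_mul]
    exact (((mul_eq_conj_mul_iff_commute hp).mp hu₂sym).of_mul_eq_one_right hu₂ hu₂').map L
  rw [mul_eq_conj_mul_iff_commute hLp] at hu₃sym hΦ ⊢
  rw [hprod]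
  exact ((hu₃sym.mul_right hΦ).mul_right hu₂'comm).mul_right ((hw _).symm.mul_left (hw _).symm)

end Monoid

def leg12Hom : Module.End k (V ⊗[k] V) →* Module.End k (V ⊗[k] (V ⊗[k] V)) :=
  (TensorProduct.assoc k V V V).conjRingEquiv.toMonoidHom.comp
    (Module.End.rTensorAlgHom k (V ⊗[k] V) V).toMonoidHom

def leg23Hom : Module.End k (V ⊗[k] V) →* Module.End k (V ⊗[k] (V ⊗[k] V)) :=
  (Module.End.lTensorAlgHom k (V ⊗[k] V) V).toMonoidHom

section Legs

variable {k V}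

theorem leg12Hom_apply (X : Module.End k (V ⊗[k] V)) : leg12Hom k V X = leg12 k V X := rfl

theorem lTensor_lTensor_eq_conj (c : Module.End k V) :
    LinearMap.lTensor V (LinearMap.lTensor V c) =
      (TensorProduct.assoc k V V V).conjRingEquiv (LinearMap.lTensor (V ⊗[k] V) c) := by
  rw [LinearMap.lTensor_tensor]
  ext x
  simp

theorem commute_lTensor_lTensor_leg12 (c : Module.End k V) (X : Module.End k (V ⊗[k] V)) :
    Commute (LinearMap.lTensor V (LinearMap.lTensor V c)) (leg12 k V X) := by
  rw [lTensor_lTensor_eq_conj, ← leg12Hom_apply]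
  refine Commute.map ?_ (TensorProduct.assoc k V V V).conjRingEquiv
  exact (LinearMap.lTensor_comp_rTensor _ _ _).trans (LinearMap.rTensor_comp_lTensor _ _ _).symm

theorem map_map_eq_leg12_mul (a b c : Module.End k V) :
    TensorProduct.map a (TensorProduct.map b c) =
      leg12 k V (TensorProduct.map a b) * LinearMap.lTensor V (LinearMap.lTensor V c) := by
  ext x y z
  simp [leg12, Module.End.mul_apply]

theorem commute_rTensor_leg23 (a : Module.End k V) (X : Module.End k (V ⊗[k] V)) :
    Commute (LinearMap.rTensor (V ⊗[k] V) a) (leg23 k V X) :=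
  (LinearMap.rTensor_comp_lTensor _ _ _).trans (LinearMap.lTensor_comp_rTensor _ _ _).symm

theorem map_map_eq_leg23_mul (a b c : Module.End k V) :
    TensorProduct.map a (TensorProduct.map b c) =
      leg23 k V (TensorProduct.map b c) * LinearMap.rTensor (V ⊗[k] V) a :=
  (LinearMap.lTensor_comp_rTensor _ _ _).symm

theorem tauE_mul (X Y : Module.End k (V ⊗[k] V)) :
    tauE k V (X * Y) = tauE k V X * tauE k V Y := by
  simp only [tauE, mul_assoc, ← mul_assoc (flipE k V) (flipE k V), flipE_mul_self, one_mul]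

theorem tauE_map (a b : Module.End k V) :
    tauE k V (TensorProduct.map a b) = TensorProduct.map b a := by
  ext x y
  simp [tauE, flipE]

theorem twistedMatrix_gauge {R F F' u₂ u₂' A A' : Module.End k (V ⊗[k] V)}
    (hA' : tauE k V A' = A') (hu₂ : u₂ * u₂' = 1) (hu₂' : u₂' * u₂ = 1)
    (hu₂sym : R * u₂ = tauE k V u₂ * R) :
    tauE k V (A' * F' * u₂') * R * (u₂ * F * A) = A' * (tauE k V F' * R * F) * A := by
  have hu₂'sym : tauE k V u₂' * R = R * u₂' :=
    (mul_eq_conj_mul_of_mul_eq_one flipE_mul_self hu₂ hu₂' hu₂sym).symm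
  calc tauE k V (A' * F' * u₂') * R * (u₂ * F * A)
      = A' * tauE k V F' * (tauE k V u₂' * R) * u₂ * F * A := by
        rw [tauE_mul, tauE_mul, hA']; simp only [mul_assoc]
    _ = A' * tauE k V F' * R * (u₂' * u₂) * F * A := by rw [hu₂'sym]; simp only [mul_assoc]
    _ = A' * (tauE k V F' * R * F) * A := by rw [hu₂', mul_one]; simp only [mul_assoc]

end Legs

theorem twistingPair_gauge
    (R F F' : Module.End k (V ⊗[k] V))
    (G G' : Module.End k (V ⊗[k] (V ⊗[k] V)))
    (u₁ u₁' : Module.End k V)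
    (u₂ u₂' : Module.End k (V ⊗[k] V))
    (u₃ u₃' : Module.End k (V ⊗[k] (V ⊗[k] V)))
    (hTP : TwistingPair k V R F F' G G')
    (hu₁ : u₁ * u₁' = 1) (hu₁' : u₁' * u₁ = 1)
    (hu₂ : u₂ * u₂' = 1) (hu₂' : u₂' * u₂ = 1)
    (hu₃ : u₃ * u₃' = 1) (hu₃' : u₃' * u₃ = 1)
    (hu₂sym : R * u₂ = tauE k V u₂ * R)
    (hu₃sym12 : leg12 k V R * u₃ = (P12 k V * u₃ * P12 k V) * leg12 k V R)
    (hu₃sym23 : leg23 k V R * u₃ = (P23 k V * u₃ * P23 k V) * leg23 k V R) :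
    TwistingPair k V R
      (u₂ * F * TensorProduct.map u₁ u₁)
      (TensorProduct.map u₁' u₁' * F' * u₂')
      (u₃ * G * TensorProduct.map u₁ (TensorProduct.map u₁ u₁))
      (TensorProduct.map u₁' (TensorProduct.map u₁' u₁') * G' * u₃') ∧
    tauE k V (TensorProduct.map u₁' u₁' * F' * u₂') * R *
        (u₂ * F * TensorProduct.map u₁ u₁) =
      TensorProduct.map u₁' u₁' * (tauE k V F' * R * F) * TensorProduct.map u₁ u₁ := by
  obtain ⟨hFF', hF'F, hGG', hG'G, hΦ₁₂, hΦ₂₃⟩ := hTP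
  have hA : TensorProduct.map u₁ u₁ * TensorProduct.map u₁' u₁' = 1 := by
    rw [← TensorProduct.map_mul, hu₁, TensorProduct.map_one]
  have hA' : TensorProduct.map u₁' u₁' * TensorProduct.map u₁ u₁ = 1 := by
    rw [← TensorProduct.map_mul, hu₁', TensorProduct.map_one]
  have hU : TensorProduct.map u₁ (TensorProduct.map u₁ u₁) *
      TensorProduct.map u₁' (TensorProduct.map u₁' u₁') = 1 := by
    rw [← TensorProduct.map_mul, hu₁, hA, TensorProduct.map_one]
  have hU' : TensorProduct.map u₁' (TensorProduct.map u₁' u₁') *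
      TensorProduct.map u₁ (TensorProduct.map u₁ u₁) = 1 := by
    rw [← TensorProduct.map_mul, hu₁', hA', TensorProduct.map_one]
  refine ⟨⟨mul_mul_mul_eq_one hu₂ hFF' hA, mul_mul_mul_eq_one hA' hF'F hu₂',
    mul_mul_mul_eq_one hu₃ hGG' hU, mul_mul_mul_eq_one hU' hG'G hu₃', ?_, ?_⟩,
    twistedMatrix_gauge (tauE_map u₁' u₁') hu₂ hu₂' hu₂sym⟩
  · rw [map_map_eq_leg12_mul]
    exact twistCondition_gauge (leg12Hom k V) (p := flipE k V) (r := R) flipE_mul_self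
      (commute_lTensor_lTensor_leg12 u₁) hA hu₂ hu₂' hu₂sym hu₃sym12 hΦ₁₂
  · rw [map_map_eq_leg23_mul]
    exact twistCondition_gauge (leg23Hom k V) (p := flipE k V) (r := R) flipE_mul_self
      (commute_rTensor_leg23 u₁) hA hu₂ hu₂' hu₂sym hu₃sym23 hΦ₂₃
end
end
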